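/- Let f_MF(m) = -(1/2)m² - (1/β) I(m) on [-1,1], where I(m) = -((1-m)/2) log((1-m)/2) - ((1+m)/2) log((1+m)/2). If β ≤ 1, then f_MF is strictly convex on (-1,1); if β > 1, then f_MF has exactly two global minima at ±m*(β), where m*(β) > 0 is the unique positive solution of m = tanh(βm). -/

import Mathlib

/-- Binary entropy `I(m)` on `[-1,1]`. -/
noncomputable def Ient (m : ℝ) : ℝ :=
  -((1 - m) / 2) * Real.log ((1 - m) / 2) - ((1 + m) / 2) * Real.log ((1 + m) / 2)

/-- Mean-field free energy `f_MF(m) = -(1/2)m² - (1/β) I(m)`. -/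
noncomputable def fMF (β m : ℝ) : ℝ := -(1 / 2) * m ^ 2 - (1 / β) * Ient m

/-!
The derivative of `f_MF` is `artanh x / β - x`, which vanishes exactly at the solutions of
`x = tanh (β x)`, and its own derivative is `1 / (β (1 - x²)) - 1`. For `β ≤ 1` the latter is
positive except at `0`, so `f_MF'` is strictly increasing and `f_MF` strictly convex. For `β > 1`,
`f_MF'` vanishes at `0`, decreases on `[0, √(1 - 1/β)]` and then increases to `+∞`; so it has a
single zero `m*` in `(0, 1)`, being negative before it and positive after it. Thus `f_MF`
decreases on `[0, m*]` and increases on `[m*, 1]`, and since `f_MF` is even its minimizers on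
`[-1, 1]` are exactly `±m*`.
-/

open Real Set

theorem Real.artanh_eq_half_log_sub_log {x : ℝ} (hx : x ∈ Ioo (-1) 1) :
    artanh x = (log (1 + x) - log (1 - x)) / 2 := by
  rw [artanh_eq_half_log (Ioo_subset_Icc_self hx),
    log_div (by linarith [hx.1]) (by linarith [hx.2])]
  ring

theorem Real.hasDerivAt_artanh {x : ℝ} (hx : x ∈ Ioo (-1) 1) :
    HasDerivAt artanh (1 - x ^ 2)⁻¹ x := by
  have h₁ : (1 + x) ≠ 0 := by linarith [hx.1]
  have h₂ : (1 - x) ≠ 0 := by linarith [hx.2]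
  have hlog : HasDerivAt (fun y => (log (1 + y) - log (1 - y)) / 2) (1 - x ^ 2)⁻¹ x := by
    have d₁ := ((hasDerivAt_id x).const_add 1).log h₁
    have d₂ := ((hasDerivAt_id x).const_sub 1).log h₂
    refine ((d₁.sub d₂).div_const 2).congr_deriv ?_
    rw [show 1 - x ^ 2 = (1 + x) * (1 - x) by ring]
    simp only [id]
    field_simp
    ring
  have hfun : (fun y => (log (1 + y) - log (1 - y)) / 2) =ᶠ[nhds x] artanh :=
    Filter.eventually_of_mem (Ioo_mem_nhds hx.1 hx.2)
      fun y hy => (artanh_eq_half_log_sub_log hy).symm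
  exact hlog.congr_of_eventuallyEq hfun.symm

theorem Real.tanh_pos {x : ℝ} (hx : 0 < x) : 0 < tanh x := by
  rw [tanh_eq_sinh_div_cosh]
  exact div_pos (sinh_pos_iff.2 hx) (cosh_pos x)

theorem strictMonoOn_of_deriv_pos_of_ne {D : Set ℝ} (hD : Convex ℝ D) {f : ℝ → ℝ}
    (hf : ContinuousOn f D) (c : ℝ) (hf' : ∀ x ∈ interior D, x ≠ c → 0 < deriv f x) :
    StrictMonoOn f D := by
  have away : ∀ a ∈ D, ∀ b ∈ D, a < b → c ∉ Ioo a b → f a < f b := by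
    intro a ha b hb hab hc
    have hsub : Icc a b ⊆ D := hD.ordConnected.out ha hb
    refine strictMonoOn_of_deriv_pos (convex_Icc a b) (hf.mono hsub) (fun x hx => ?_)
      (left_mem_Icc.2 hab.le) (right_mem_Icc.2 hab.le) hab
    refine hf' x (interior_mono hsub hx) ?_
    rintro rfl
    rw [interior_Icc] at hx
    exact hc hx
  intro a ha b hb hab
  by_cases hc : c ∈ Ioo a b
  · have hcD : c ∈ D := hD.ordConnected.out ha hb (Ioo_subset_Icc_self hc)
    exact (away a ha c hcD hc.1 (fun h => lt_irrefl c h.2)).trans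
      (away c hcD b hb hc.2 (fun h => lt_irrefl c h.1))
  · exact away a ha b hb hab hc

theorem apply_lt_of_deriv_neg_of_deriv_pos {f : ℝ → ℝ} {a m b : ℝ} (hm : m ∈ Icc a b)
    (hf : ContinuousOn f (Icc a b)) (hneg : ∀ x ∈ Ioo a m, deriv f x < 0)
    (hpos : ∀ x ∈ Ioo m b, 0 < deriv f x) {x : ℝ} (hx : x ∈ Icc a b) (hxm : x ≠ m) :
    f m < f x := by
  rcases hxm.lt_or_gt with hlt | hgt
  · refine strictAntiOn_of_deriv_neg (convex_Icc x m) (hf.mono (Icc_subset_Icc hx.1 hm.2))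
      (fun y hy => ?_) (left_mem_Icc.2 hlt.le) (right_mem_Icc.2 hlt.le) hlt
    rw [interior_Icc] at hy
    exact hneg y ⟨hx.1.trans_lt hy.1, hy.2⟩
  · refine strictMonoOn_of_deriv_pos (convex_Icc m x) (hf.mono (Icc_subset_Icc hm.1 hx.2))
      (fun y hy => ?_) (left_mem_Icc.2 hgt.le) (right_mem_Icc.2 hgt.le) hgt
    rw [interior_Icc] at hy
    exact hpos y ⟨hy.1, hy.2.trans_le hx.2⟩

theorem Ient_eq_negMulLog_add_negMulLog :
    Ient = fun m => negMulLog ((1 - m) / 2) + negMulLog ((1 + m) / 2) := by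
  funext m
  simp only [Ient, negMulLog]
  ring

theorem Ient_neg (m : ℝ) : Ient (-m) = Ient m := by
  simp only [Ient_eq_negMulLog_add_negMulLog, sub_neg_eq_add, ← sub_eq_add_neg]
  ring

theorem fMF_neg (β m : ℝ) : fMF β (-m) = fMF β m := by
  simp only [fMF, Ient_neg, neg_sq]

theorem fMF_abs (β m : ℝ) : fMF β |m| = fMF β m := by
  rcases abs_choice m with h | h <;> simp only [h, fMF_neg]

theorem continuous_fMF (β : ℝ) : Continuous (fMF β) := by
  unfold fMF
  rw [Ient_eq_negMulLog_add_negMulLog]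
  fun_prop

theorem hasDerivAt_Ient {x : ℝ} (hx : x ∈ Ioo (-1) 1) : HasDerivAt Ient (-artanh x) x := by
  have h₁ : (1 - x) / 2 ≠ 0 := by linarith [hx.2]
  have h₂ : (1 + x) / 2 ≠ 0 := by linarith [hx.1]
  have d₁ := (hasDerivAt_negMulLog h₁).comp x (((hasDerivAt_id x).const_sub 1).div_const 2)
  have d₂ := (hasDerivAt_negMulLog h₂).comp x (((hasDerivAt_id x).const_add 1).div_const 2)
  rw [Ient_eq_negMulLog_add_negMulLog]
  refine (d₁.add d₂).congr_deriv ?_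
  rw [artanh_eq_half_log_sub_log hx, log_div (by linarith [hx.2]) two_ne_zero,
    log_div (by linarith [hx.1]) two_ne_zero]
  ring

noncomputable def fMFDeriv (β x : ℝ) : ℝ := artanh x / β - x

theorem hasDerivAt_fMF (β : ℝ) {x : ℝ} (hx : x ∈ Ioo (-1) 1) :
    HasDerivAt (fMF β) (fMFDeriv β x) x := by
  have := ((hasDerivAt_pow 2 x).const_mul (-(1 / 2))).sub ((hasDerivAt_Ient hx).const_mul (1 / β))
  refine this.congr_deriv ?_
  simp only [fMFDeriv]
  ring

theorem deriv_fMF (β : ℝ) {x : ℝ} (hx : x ∈ Ioo (-1) 1) : deriv (fMF β) x = fMFDeriv β x :=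
  (hasDerivAt_fMF β hx).deriv

theorem hasDerivAt_fMFDeriv (β : ℝ) {x : ℝ} (hx : x ∈ Ioo (-1) 1) :
    HasDerivAt (fMFDeriv β) ((1 - x ^ 2)⁻¹ / β - 1) x :=
  ((hasDerivAt_artanh hx).div_const β).sub (hasDerivAt_id x)

theorem continuousOn_fMFDeriv (β : ℝ) : ContinuousOn (fMFDeriv β) (Ioo (-1) 1) :=
  fun _ hx => (hasDerivAt_fMFDeriv β hx).continuousAt.continuousWithinAt

theorem deriv_fMFDeriv (β : ℝ) {x : ℝ} (hx : x ∈ Ioo (-1) 1) :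
    deriv (fMFDeriv β) x = (β * (1 - x ^ 2))⁻¹ - 1 := by
  rw [(hasDerivAt_fMFDeriv β hx).deriv, mul_inv, div_eq_inv_mul]

theorem fMFDeriv_zero (β : ℝ) : fMFDeriv β 0 = 0 := by
  simp [fMFDeriv]

theorem fMFDeriv_eq_zero_iff {β x : ℝ} (hβ : β ≠ 0) (hx : x ∈ Ioo (-1) 1) :
    fMFDeriv β x = 0 ↔ x = tanh (β * x) := by
  rw [fMFDeriv, sub_eq_zero, div_eq_iff hβ, mul_comm x β]
  constructor
  · intro h
    rw [← h, tanh_artanh hx]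
  · intro h
    exact (congrArg artanh h).trans (artanh_tanh _)

theorem strictMonoOn_fMFDeriv_of_le_one {β : ℝ} (hβ : 0 < β) (hβ1 : β ≤ 1) :
    StrictMonoOn (fMFDeriv β) (Ioo (-1) 1) := by
  refine strictMonoOn_of_deriv_pos_of_ne (convex_Ioo _ _) (continuousOn_fMFDeriv β) 0 ?_
  intro x hx hx0
  rw [interior_Ioo] at hx
  have hx2 : 0 < 1 - x ^ 2 := by nlinarith [hx.1, hx.2]
  rw [deriv_fMFDeriv β hx, sub_pos, one_lt_inv₀ (by positivity)]
  nlinarith [sq_pos_of_ne_zero hx0]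

theorem strictConvexOn_fMF_of_le_one {β : ℝ} (hβ : 0 < β) (hβ1 : β ≤ 1) :
    StrictConvexOn ℝ (Ioo (-1) 1) (fMF β) := by
  refine StrictMonoOn.strictConvexOn_of_deriv (convex_Ioo _ _) (continuous_fMF β).continuousOn ?_
  rw [interior_Ioo]
  exact (strictMonoOn_fMFDeriv_of_le_one hβ hβ1).congr fun x hx => (deriv_fMF β hx).symm

theorem sqrt_one_sub_inv_lt_one {β : ℝ} (hβ : 0 < β) : √(1 - 1 / β) < 1 :=
  (sqrt_lt' one_pos).2 (by have := one_div_pos.2 hβ; linarith)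

theorem one_lt_mul_one_sub_sq_iff {β x : ℝ} (hβ : 1 < β) (hx : 0 ≤ x) :
    1 < β * (1 - x ^ 2) ↔ x < √(1 - 1 / β) := by
  have hβ0 : 0 < β := by linarith
  rw [lt_sqrt hx, lt_sub_iff_add_lt, ← lt_sub_iff_add_lt', div_lt_iff₀ hβ0]
  constructor <;> intro h <;> nlinarith

theorem mul_one_sub_sq_lt_one_iff {β x : ℝ} (hβ : 1 < β) (hx : 0 < x) :
    β * (1 - x ^ 2) < 1 ↔ √(1 - 1 / β) < x := by
  have hβ0 : 0 < β := by linarith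
  rw [sqrt_lt' hx, sub_lt_iff_lt_add, ← sub_lt_iff_lt_add', lt_div_iff₀ hβ0]
  constructor <;> intro h <;> nlinarith

theorem strictAntiOn_fMFDeriv {β : ℝ} (hβ : 1 < β) :
    StrictAntiOn (fMFDeriv β) (Icc 0 √(1 - 1 / β)) := by
  have hc1 := sqrt_one_sub_inv_lt_one (zero_lt_one.trans hβ)
  refine strictAntiOn_of_deriv_neg (convex_Icc _ _)
    ((continuousOn_fMFDeriv β).mono fun x hx => ⟨by linarith [hx.1], by linarith [hx.2]⟩) ?_
  intro x hx
  rw [interior_Icc] at hx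
  have hx2 : 0 < 1 - x ^ 2 := by nlinarith [hx.1, hx.2]
  rw [deriv_fMFDeriv β ⟨by linarith [hx.1], by linarith [hx.2]⟩, sub_neg,
    inv_lt_one₀ (by nlinarith), one_lt_mul_one_sub_sq_iff hβ hx.1.le]
  exact hx.2

theorem strictMonoOn_fMFDeriv {β : ℝ} (hβ : 1 < β) :
    StrictMonoOn (fMFDeriv β) (Ico √(1 - 1 / β) 1) := by
  have hc0 := sqrt_nonneg (1 - 1 / β)
  refine strictMonoOn_of_deriv_pos (convex_Ico _ _)
    ((continuousOn_fMFDeriv β).mono fun x hx => ⟨by linarith [hx.1], hx.2⟩) ?_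
  intro x hx
  rw [interior_Ico] at hx
  have hx2 : 0 < 1 - x ^ 2 := by nlinarith [hx.1, hx.2]
  rw [deriv_fMFDeriv β ⟨by linarith [hx.1], hx.2⟩, sub_pos,
    one_lt_inv₀ (by nlinarith), mul_one_sub_sq_lt_one_iff hβ (hc0.trans_lt hx.1)]
  exact hx.1

theorem exists_fMFDeriv_sign_change {β : ℝ} (hβ : 1 < β) :
    ∃ m ∈ Ioo (0 : ℝ) 1, fMFDeriv β m = 0 ∧
      (∀ x ∈ Ioo 0 m, fMFDeriv β x < 0) ∧ ∀ x ∈ Ioo m 1, 0 < fMFDeriv β x := by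
  have hβ0 : 0 < β := zero_lt_one.trans hβ
  set c := √(1 - 1 / β)
  have hc0 : 0 < c := sqrt_pos.2 (by rw [sub_pos, div_lt_one hβ0]; exact hβ)
  have hneg : ∀ x ∈ Ioc 0 c, fMFDeriv β x < 0 := fun x hx =>
    fMFDeriv_zero β ▸ strictAntiOn_fMFDeriv hβ ⟨le_rfl, hc0.le⟩ ⟨hx.1.le, hx.2⟩ hx.1
  -- at `y = tanh (2β)` one has `artanh y / β = 2 > y`
  set y := tanh (2 * β)
  have hy1 : y < 1 := tanh_lt_one _
  have hy : 0 < fMFDeriv β y := by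
    rw [fMFDeriv, artanh_tanh, mul_div_cancel_right₀ _ hβ0.ne']
    linarith
  have hcy : c < y := by
    by_contra! h
    exact (hneg y ⟨tanh_pos (by positivity), h⟩).not_gt hy
  obtain ⟨m, hm, hm0⟩ : ∃ m ∈ Ioo c y, fMFDeriv β m = 0 :=
    intermediate_value_Ioo hcy.le
      ((continuousOn_fMFDeriv β).mono fun x hx => ⟨by linarith [hx.1], hx.2.trans_lt hy1⟩)
      ⟨hneg c ⟨hc0, le_rfl⟩, hy⟩
  have hm1 : m < 1 := hm.2.trans hy1
  refine ⟨m, ⟨hc0.trans hm.1, hm1⟩, hm0, fun x hx => ?_, fun x hx => ?_⟩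
  · rcases le_or_gt x c with h | h
    · exact hneg x ⟨hx.1, h⟩
    · exact hm0 ▸ strictMonoOn_fMFDeriv hβ ⟨h.le, hx.2.trans hm1⟩ ⟨hm.1.le, hm1⟩ hx.2
  · exact hm0 ▸
      strictMonoOn_fMFDeriv hβ ⟨hm.1.le, hm1⟩ ⟨hm.1.le.trans hx.1.le, hx.2⟩ hx.1

theorem eq_of_fMFDeriv_eq_zero {β m : ℝ} (hneg : ∀ x ∈ Ioo 0 m, fMFDeriv β x < 0)
    (hpos : ∀ x ∈ Ioo m 1, 0 < fMFDeriv β x) {x : ℝ} (hx : x ∈ Ioo 0 1)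
    (hx0 : fMFDeriv β x = 0) : x = m := by
  rcases lt_trichotomy x m with h | h | h
  · exact absurd hx0 (hneg x ⟨hx.1, h⟩).ne
  · exact h
  · exact absurd hx0 (hpos x ⟨h, hx.2⟩).ne'

theorem fMF_lt_of_abs_ne {β m : ℝ} (hneg : ∀ x ∈ Ioo 0 m, fMFDeriv β x < 0)
    (hpos : ∀ x ∈ Ioo m 1, 0 < fMFDeriv β x) (hm : m ∈ Ioo 0 1) {x : ℝ}
    (hx : x ∈ Icc (-1) 1) (hxm : |x| ≠ m) : fMF β m < fMF β x := by
  rw [← fMF_abs β x]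
  refine apply_lt_of_deriv_neg_of_deriv_pos (Ioo_subset_Icc_self hm)
    (continuous_fMF β).continuousOn (fun y hy => ?_) (fun y hy => ?_)
    ⟨abs_nonneg x, abs_le.2 hx⟩ hxm
  · rw [deriv_fMF β ⟨by linarith [hy.1], hy.2.trans hm.2⟩]
    exact hneg y hy
  · rw [deriv_fMF β ⟨by linarith [hm.1, hy.1], hy.2⟩]
    exact hpos y hy

/-- If `β ≤ 1` then `f_MF` is strictly convex on `(-1,1)`; if `β > 1` then
`f_MF` has exactly two global minima on `[-1,1]`, at `±m*(β)`, where
`m*(β) > 0` is the unique positive solution of `m = tanh(βm)`. -/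
theorem stmt_7 (β : ℝ) (hβ : 0 < β) :
    (β ≤ 1 → StrictConvexOn ℝ (Set.Ioo (-1 : ℝ) 1) (fMF β)) ∧
    (1 < β → ∃ m : ℝ, 0 < m ∧ m = Real.tanh (β * m) ∧
      (∀ m' : ℝ, 0 < m' → m' = Real.tanh (β * m') → m' = m) ∧
      IsMinOn (fMF β) (Set.Icc (-1 : ℝ) 1) m ∧
      IsMinOn (fMF β) (Set.Icc (-1 : ℝ) 1) (-m) ∧
      ∀ x ∈ Set.Icc (-1 : ℝ) 1,
        IsMinOn (fMF β) (Set.Icc (-1 : ℝ) 1) x → x = m ∨ x = -m) := by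
  refine ⟨strictConvexOn_fMF_of_le_one hβ, fun hβ1 => ?_⟩
  obtain ⟨m, hm, hm0, hneg, hpos⟩ := exists_fMFDeriv_sign_change hβ1
  have hmin : IsMinOn (fMF β) (Icc (-1) 1) m := fun x hx => by
    rcases eq_or_ne |x| m with h | h
    · show fMF β m ≤ fMF β x
      rw [← fMF_abs β x, h]
    · exact (fMF_lt_of_abs_ne hneg hpos hm hx h).le
  refine ⟨m, hm.1, (fMFDeriv_eq_zero_iff hβ.ne' ⟨by linarith [hm.1], hm.2⟩).1 hm0,
    fun m' hm' hfix => ?_, hmin, ?_, fun x hx hxmin => ?_⟩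
  · have hm'1 : m' ∈ Ioo (-1) 1 := hfix ▸ ⟨neg_one_lt_tanh _, tanh_lt_one _⟩
    exact eq_of_fMFDeriv_eq_zero hneg hpos ⟨hm', hm'1.2⟩
      ((fMFDeriv_eq_zero_iff hβ.ne' hm'1).2 hfix)
  · simpa only [IsMinOn, IsMinFilter, fMF_neg] using hmin
  · by_contra h
    have hxm : |x| ≠ m := by rwa [ne_eq, abs_eq hm.1.le]
    exact (fMF_lt_of_abs_ne hneg hpos hm hx hxm).not_ge (hxmin ⟨by linarith [hm.1], hm.2.le⟩)
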